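/- Let X be a finite nonempty set, E ⊆ X × X strongly connected, C, F_1, …, F_K : E → ℝ with F_1, …, F_K linearly independent modulo N, let 𝔈 be the exponential family generated by C, F_1, …, F_K, and let μ_1, …, μ_K ∈ ℝ with mixture family M = M(μ_1,…,μ_K) nonempty. Fix v ∈ 𝔈 and let w_* be the unique element of M ∩ 𝔈. Then w_* is the unique minimizer over w ∈ M of the divergence rate D(w|v) = Σ_{(x,y)∈E} p_w^{(2)}(x,y) log(w(y|x)/v(y|x)): for every w ∈ M with w ≠ w_*, D(w_*|v) < D(w|v). -/

import Mathlib

open scoped Classical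
open Finset

/-- A (row-stochastic) Markov kernel on a finite set `X`: `w x y` means `w(y|x)`. -/
def IsMarkovKernel {X : Type*} [Fintype X] (w : X → X → ℝ) : Prop :=
  (∀ x y : X, 0 ≤ w x y) ∧ ∀ x : X, ∑ y : X, w x y = 1

/-- The directed graph `(X, E)` is strongly connected: from any `x` there is a
finite directed path along edges of `E` to any `y`. -/
def StronglyConnected {X : Type*} (E : Set (X × X)) : Prop :=
  ∀ x y : X, Relation.ReflTransGen (fun a b => (a, b) ∈ E) x y

/-- Membership in `W(X,E)`: a Markov kernel whose support is exactly `E`. -/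
def MemW {X : Type*} [Fintype X] (E : Set (X × X)) (w : X → X → ℝ) : Prop :=
  IsMarkovKernel w ∧ ∀ x y : X, 0 < w x y ↔ (x, y) ∈ E

/-- `p` is a stationary probability distribution of the kernel `w`. -/
def KernelIsStationary {X : Type*} [Fintype X] (w : X → X → ℝ) (p : X → ℝ) : Prop :=
  (∀ x : X, 0 ≤ p x) ∧ (∑ x : X, p x = 1) ∧ ∀ y : X, ∑ x : X, p x * w x y = p y

/-- The stationary distribution `p_w` of `w` (unique for `w ∈ W(X,E)` with
`(X,E)` strongly connected), obtained by choice from existence. -/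
noncomputable def statDist {X : Type*} [Fintype X] (w : X → X → ℝ) : X → ℝ :=
  if h : ∃ p : X → ℝ, KernelIsStationary w p then h.choose else fun _ => 0

/-- The divergence rate `D(v|w) = Σ_{(x,y)∈E} p_v(x) v(y|x) log (v(y|x)/w(y|x))`. -/
noncomputable def divRate {X : Type*} [Fintype X] (E : Set (X × X))
    (v w : X → X → ℝ) : ℝ :=
  ∑ x : X, ∑ y : X,
    if (x, y) ∈ E then statDist v x * v x y * Real.log (v x y / w x y) else 0

/-- `F_1, …, F_K` are linearly independent modulo
`N = {(x,y) ↦ κ(y) − κ(x) − c}` (as functions on `E`). -/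
def LinIndepModN {X : Type*} (E : Set (X × X)) {K : ℕ} (F : Fin K → X → X → ℝ) : Prop :=
  ∀ a : Fin K → ℝ,
    (∃ (κ : X → ℝ) (c : ℝ), ∀ x y : X, (x, y) ∈ E →
      ∑ k : Fin K, a k * F k x y = κ y - κ x - c) →
    a = 0

/-- Membership in the exponential family generated by `C, F_1, …, F_K`. -/
def MemExpFam {X : Type*} [Fintype X] (E : Set (X × X)) {K : ℕ}
    (C : X → X → ℝ) (F : Fin K → X → X → ℝ) (w : X → X → ℝ) : Prop :=
  MemW E w ∧ ∃ (θ : Fin K → ℝ) (κ : X → ℝ) (ψ : ℝ), ∀ x y : X, (x, y) ∈ E →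
    w x y = Real.exp (C x y + ∑ k : Fin K, θ k * F k x y + κ y - κ x - ψ)

/-- Membership in the mixture family `M(μ_1,…,μ_K)`:
`Σ_{(x,y)∈E} p_w(x) w(y|x) F_k(x,y) = μ_k` for all `k`. -/
def MemMix {X : Type*} [Fintype X] (E : Set (X × X)) {K : ℕ}
    (F : Fin K → X → X → ℝ) (μ : Fin K → ℝ) (w : X → X → ℝ) : Prop :=
  MemW E w ∧ ∀ k : Fin K,
    (∑ x : X, ∑ y : X, if (x, y) ∈ E then statDist w x * w x y * F k x y else 0) = μ k


set_option linter.unusedSectionVars false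

section exist
variable {X : Type*} [Fintype X] [Nonempty X]

noncomputable def Tmap (w : X → X → ℝ) (p : X → ℝ) : X → ℝ := fun y => ∑ x : X, p x * w x y

lemma Tmap_continuous (w : X → X → ℝ) : Continuous (Tmap w) := by
  apply continuous_pi; intro y
  exact continuous_finset_sum _ fun x _ => (continuous_apply x).mul continuous_const

def simplexSet (X : Type*) [Fintype X] : Set (X → ℝ) :=
  {p | (∀ x, 0 ≤ p x) ∧ ∑ x, p x = 1}

lemma simplex_le_one {p : X → ℝ} (hp : p ∈ simplexSet X) (x : X) : p x ≤ 1 := by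
  have := Finset.single_le_sum (fun i _ => hp.1 i) (Finset.mem_univ x)
  simpa [hp.2] using this

lemma simplex_isCompact : IsCompact (simplexSet X) := by
  have hsub : simplexSet X ⊆ Set.univ.pi fun _ : X => Set.Icc (0:ℝ) 1 := by
    intro p hp x _
    exact ⟨hp.1 x, simplex_le_one hp x⟩
  have hclosed : IsClosed (simplexSet X) := by
    have : simplexSet X = (⋂ x : X, {p : X → ℝ | 0 ≤ p x}) ∩ {p | ∑ x, p x = 1} := by
      ext p; simp [simplexSet, Set.mem_iInter]
    rw [this]
    exact (isClosed_iInter fun x => isClosed_le continuous_const (continuous_apply x)).inter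
      (isClosed_eq (continuous_finset_sum _ fun x _ => continuous_apply x) continuous_const)
  exact (isCompact_univ_pi fun _ => isCompact_Icc).of_isClosed_subset hclosed hsub

lemma Tmap_mem {w : X → X → ℝ} (hw : IsMarkovKernel w) {p : X → ℝ}
    (hp : p ∈ simplexSet X) : Tmap w p ∈ simplexSet X := by
  constructor
  · intro y; exact Finset.sum_nonneg fun x _ => mul_nonneg (hp.1 x) (hw.1 x y)
  · rw [show ∑ y : X, Tmap w p y = ∑ y : X, ∑ x : X, p x * w x y from rfl, Finset.sum_comm]
    simp only [← Finset.mul_sum, hw.2, mul_one, hp.2]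

lemma exists_stationary (w : X → X → ℝ) (hw : IsMarkovKernel w) :
    ∃ p : X → ℝ, KernelIsStationary w p := by
  classical
  set p0 : X → ℝ := fun _ => (Fintype.card X : ℝ)⁻¹ with hp0
  have hcard : (0:ℝ) < Fintype.card X := by exact_mod_cast Fintype.card_pos
  have hp0mem : p0 ∈ simplexSet X := by
    constructor
    · intro x; positivity
    · simp [hp0, Finset.sum_const]
  set ps : ℕ → X → ℝ := fun n => (Tmap w)^[n] p0 with hps
  have hpsmem : ∀ n, ps n ∈ simplexSet X := by
    intro n; induction n with
    | zero => simpa [hps] using hp0mem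
    | succ n ih =>
      have : ps (n+1) = Tmap w (ps n) := by
        simp only [hps]; rw [Function.iterate_succ_apply']
      rw [this]; exact Tmap_mem hw ih
  have hstep : ∀ k (y : X), ps (k+1) y = ∑ x : X, ps k x * w x y := by
    intro k y
    have : ps (k+1) = Tmap w (ps k) := by
      simp only [hps]; rw [Function.iterate_succ_apply']
    rw [this]; rfl
  set q : ℕ → X → ℝ := fun n y => ((n:ℝ)+1)⁻¹ * ∑ k ∈ Finset.range (n+1), ps k y with hq
  have hnpos : ∀ n : ℕ, (0:ℝ) < (n:ℝ) + 1 := fun n => by positivity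
  have hqmem : ∀ n, q n ∈ simplexSet X := by
    intro n
    constructor
    · intro y
      exact mul_nonneg (le_of_lt (inv_pos.2 (hnpos n)))
        (Finset.sum_nonneg fun k _ => (hpsmem k).1 y)
    · rw [show ∑ y : X, q n y
          = ∑ y : X, ((n:ℝ)+1)⁻¹ * ∑ k ∈ Finset.range (n+1), ps k y from rfl]
      rw [← Finset.mul_sum, Finset.sum_comm]
      rw [Finset.sum_congr rfl fun k (_ : k ∈ Finset.range (n+1)) => (hpsmem k).2]
      simp only [Finset.sum_const, Finset.card_range, nsmul_eq_mul, mul_one]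
      push_cast
      rw [inv_mul_cancel₀ (ne_of_gt (hnpos n))]
  have hTq : ∀ n (y : X), Tmap w (q n) y - q n y = ((n:ℝ)+1)⁻¹ * (ps (n+1) y - ps 0 y) := by
    intro n y
    have h1 : Tmap w (q n) y = ((n:ℝ)+1)⁻¹ * ∑ k ∈ Finset.range (n+1), ps (k+1) y := by
      show (∑ x : X, q n x * w x y) = _
      simp only [hq]
      calc ∑ x : X, (((n:ℝ)+1)⁻¹ * ∑ k ∈ Finset.range (n+1), ps k x) * w x y
          = ∑ x : X, ∑ k ∈ Finset.range (n+1), ((n:ℝ)+1)⁻¹ * (ps k x * w x y) := by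
            refine Finset.sum_congr rfl fun x _ => ?_
            rw [mul_assoc, Finset.sum_mul, Finset.mul_sum]
        _ = ∑ k ∈ Finset.range (n+1), ∑ x : X, ((n:ℝ)+1)⁻¹ * (ps k x * w x y) :=
            Finset.sum_comm
        _ = ((n:ℝ)+1)⁻¹ * ∑ k ∈ Finset.range (n+1), ∑ x : X, ps k x * w x y := by
            rw [Finset.mul_sum]
            exact Finset.sum_congr rfl fun k _ => (Finset.mul_sum _ _ _).symm
        _ = ((n:ℝ)+1)⁻¹ * ∑ k ∈ Finset.range (n+1), ps (k+1) y := by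
            congr 1; exact Finset.sum_congr rfl fun k _ => (hstep k y).symm
    rw [h1, show q n y = ((n:ℝ)+1)⁻¹ * ∑ k ∈ Finset.range (n+1), ps k y from rfl]
    rw [← mul_sub, ← Finset.sum_sub_distrib, Finset.sum_range_sub (fun k => ps k y)]
  have hbound : ∀ n (y : X), |Tmap w (q n) y - q n y| ≤ 2 * ((n:ℝ)+1)⁻¹ := by
    intro n y
    rw [hTq n y, abs_mul, abs_of_pos (inv_pos.2 (hnpos n))]
    rw [mul_comm]
    apply mul_le_mul_of_nonneg_right _ (le_of_lt (inv_pos.2 (hnpos n)))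
    have h1 : |ps (n+1) y - ps 0 y| ≤ |ps (n+1) y| + |ps 0 y| := abs_sub _ _
    have h2 : |ps (n+1) y| ≤ 1 := by
      rw [abs_of_nonneg ((hpsmem (n+1)).1 y)]; exact simplex_le_one (hpsmem (n+1)) y
    have h3 : |ps 0 y| ≤ 1 := by
      rw [abs_of_nonneg ((hpsmem 0).1 y)]; exact simplex_le_one (hpsmem 0) y
    linarith
  obtain ⟨a, hamem, φ, hφ, hconv⟩ := simplex_isCompact.tendsto_subseq hqmem
  refine ⟨a, hamem.1, hamem.2, fun y => ?_⟩
  -- show Tmap w a y = a y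
  have hconvy : Filter.Tendsto (fun j => q (φ j) y) Filter.atTop (nhds (a y)) :=
    (tendsto_pi_nhds.1 hconv) y
  have hconvT : Filter.Tendsto (fun j => Tmap w (q (φ j)) y) Filter.atTop
      (nhds (Tmap w a y)) :=
    (tendsto_pi_nhds.1 (((Tmap_continuous w).tendsto a).comp hconv)) y
  have hdiff : Filter.Tendsto (fun j => Tmap w (q (φ j)) y - q (φ j) y)
      Filter.atTop (nhds 0) := by
    refine squeeze_zero_norm (a := fun j : ℕ => 2 * ((j:ℝ)+1)⁻¹) (fun j => ?_) ?_
    ·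
      calc ‖Tmap w (q (φ j)) y - q (φ j) y‖ ≤ 2 * ((φ j : ℝ)+1)⁻¹ := hbound (φ j) y
        _ ≤ 2 * ((j:ℝ)+1)⁻¹ := by
            apply mul_le_mul_of_nonneg_left _ (by norm_num)
            apply inv_anti₀ (hnpos j)
            have : (j:ℝ) ≤ (φ j : ℝ) := by exact_mod_cast hφ.le_apply
            linarith
    · have : Filter.Tendsto (fun j : ℕ => 1 / ((j:ℝ)+1)) Filter.atTop (nhds 0) :=
        tendsto_one_div_add_atTop_nhds_zero_nat
      have h2 := this.const_mul (2:ℝ)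
      simpa [one_div, mul_comm] using h2
  have : Filter.Tendsto (fun j => Tmap w (q (φ j)) y) Filter.atTop (nhds (a y)) := by
    have := hdiff.add hconvy
    simpa using this
  exact tendsto_nhds_unique hconvT this
end exist




section stat
variable {X : Type*} [Fintype X] [Nonempty X] {E : Set (X × X)} {w : X → X → ℝ}

lemma statDist_spec (hw : IsMarkovKernel w) : KernelIsStationary w (statDist w) := by
  have h := exists_stationary w hw
  rw [statDist, dif_pos h]
  exact h.choose_spec

lemma memW_pos (hw : MemW E w) {x y : X} (hxy : (x, y) ∈ E) : 0 < w x y :=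
  (hw.2 x y).2 hxy

lemma memW_zero (hw : MemW E w) {x y : X} (hxy : (x, y) ∉ E) : w x y = 0 := by
  by_contra h
  exact hxy ((hw.2 x y).1 (lt_of_le_of_ne (hw.1.1 x y) (Ne.symm h)))

lemma statDist_pos (hE : StronglyConnected E) (hw : MemW E w) (z : X) :
    0 < statDist w z := by
  obtain ⟨hnn, hsum, hstat⟩ := statDist_spec hw.1
  set p := statDist w
  have hx0 : ∃ x0, 0 < p x0 := by
    by_contra h
    push_neg at h
    have : ∀ x, p x = 0 := fun x => le_antisymm (h x) (hnn x)
    simp [this] at hsum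
  obtain ⟨x0, hx0⟩ := hx0
  have key : ∀ a b : X, Relation.ReflTransGen (fun a b => (a, b) ∈ E) a b →
      0 < p a → 0 < p b := by
    intro a b hab
    induction hab with
    | refl => exact id
    | @tail b' c' hbc hcd ih =>
      intro ha
      have hb' : 0 < p b' := ih ha
      have : p b' * w b' c' ≤ p c' := by
        rw [← hstat c']
        exact Finset.single_le_sum
          (fun x _ => mul_nonneg (hnn x) (hw.1.1 x c')) (Finset.mem_univ b')
      exact lt_of_lt_of_le (mul_pos hb' (memW_pos hw hcd)) this
  exact key x0 z (hE x0 z) hx0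
end stat




section main
variable {X : Type*} [Fintype X] [Nonempty X] {E : Set (X × X)} {w : X → X → ℝ}

lemma sumP_eq (hw : MemW E w) (f : X → X → ℝ) :
    (∑ x : X, ∑ y : X, if (x, y) ∈ E then statDist w x * w x y * f x y else 0)
      = ∑ x : X, ∑ y : X, statDist w x * w x y * f x y := by
  refine Finset.sum_congr rfl fun x _ => Finset.sum_congr rfl fun y _ => ?_
  by_cases h : (x, y) ∈ E
  · simp [h]
  · simp [h, memW_zero hw h]

lemma sum_pw_one (hw : MemW E w) :
    ∑ x : X, ∑ y : X, statDist w x * w x y = 1 := by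
  obtain ⟨hnn, hsum, hstat⟩ := statDist_spec hw.1
  calc ∑ x : X, ∑ y : X, statDist w x * w x y
      = ∑ x : X, statDist w x * ∑ y : X, w x y := by
        exact Finset.sum_congr rfl fun x _ => (Finset.mul_sum _ _ _).symm
    _ = ∑ x : X, statDist w x := by
        refine Finset.sum_congr rfl fun x _ => by rw [hw.1.2 x, mul_one]
    _ = 1 := hsum

lemma sum_pw_grad (hw : MemW E w) (κ : X → ℝ) :
    ∑ x : X, ∑ y : X, statDist w x * w x y * (κ y - κ x) = 0 := by
  obtain ⟨hnn, hsum, hstat⟩ := statDist_spec hw.1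
  have h1 : ∑ x : X, ∑ y : X, statDist w x * w x y * κ y
      = ∑ x : X, statDist w x * κ x := by
    rw [Finset.sum_comm]
    refine Finset.sum_congr rfl fun y _ => ?_
    calc ∑ x : X, statDist w x * w x y * κ y
        = (∑ x : X, statDist w x * w x y) * κ y := (Finset.sum_mul _ _ _).symm
      _ = statDist w y * κ y := by rw [hstat y]
  have h2 : ∑ x : X, ∑ y : X, statDist w x * w x y * κ x
      = ∑ x : X, statDist w x * κ x := by
    refine Finset.sum_congr rfl fun x _ => ?_
    calc ∑ y : X, statDist w x * w x y * κ x
        = ∑ y : X, (statDist w x * κ x) * w x y := by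
          refine Finset.sum_congr rfl fun y _ => by ring
      _ = (statDist w x * κ x) * ∑ y : X, w x y := (Finset.mul_sum _ _ _).symm
      _ = statDist w x * κ x := by rw [hw.1.2 x, mul_one]
  calc ∑ x : X, ∑ y : X, statDist w x * w x y * (κ y - κ x)
      = ∑ x : X, ∑ y : X,
          (statDist w x * w x y * κ y - statDist w x * w x y * κ x) := by
        refine Finset.sum_congr rfl fun x _ => Finset.sum_congr rfl fun y _ => by ring
    _ = (∑ x : X, ∑ y : X, statDist w x * w x y * κ y)
        - ∑ x : X, ∑ y : X, statDist w x * w x y * κ x := by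
        simp [Finset.sum_sub_distrib]
    _ = 0 := by rw [h1, h2, sub_self]

lemma divRate_self (hw : MemW E w) : divRate E w w = 0 := by
  unfold divRate
  refine Finset.sum_eq_zero fun x _ => Finset.sum_eq_zero fun y _ => ?_
  by_cases h : (x, y) ∈ E
  · simp [h, div_self (ne_of_gt (memW_pos hw h))]
  · simp [h]

lemma divRate_decomp {K : ℕ} (C : X → X → ℝ) (F : Fin K → X → X → ℝ)
    (μ : Fin K → ℝ) (u : X → X → ℝ) (θ : Fin K → ℝ) (κ : X → ℝ) (ψ : ℝ)
    (hw : MemMix E F μ w)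
    (hu : ∀ x y : X, (x, y) ∈ E →
      u x y = Real.exp (C x y + ∑ k : Fin K, θ k * F k x y + κ y - κ x - ψ)) :
    divRate E w u
      = (∑ x : X, ∑ y : X, statDist w x * w x y * Real.log (w x y))
        - (∑ x : X, ∑ y : X, statDist w x * w x y * C x y)
        - (∑ k : Fin K, θ k * μ k) + ψ := by
  have hWw := hw.1
  have step1 : divRate E w u = ∑ x : X, ∑ y : X, statDist w x * w x y *
      (Real.log (w x y) - C x y - (∑ k : Fin K, θ k * F k x y) - (κ y - κ x) + ψ) := by
    unfold divRate
    refine Finset.sum_congr rfl fun x _ => Finset.sum_congr rfl fun y _ => ?_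
    by_cases h : (x, y) ∈ E
    · rw [if_pos h, Real.log_div (ne_of_gt (memW_pos hWw h))
        (by rw [hu x y h]; exact Real.exp_ne_zero _), hu x y h, Real.log_exp]
      ring
    · rw [if_neg h, memW_zero hWw h]; ring
  rw [step1]
  have expand : ∀ x y : X, statDist w x * w x y *
      (Real.log (w x y) - C x y - (∑ k : Fin K, θ k * F k x y) - (κ y - κ x) + ψ)
      = statDist w x * w x y * Real.log (w x y)
        - statDist w x * w x y * C x y
        - statDist w x * w x y * (∑ k : Fin K, θ k * F k x y)
        - statDist w x * w x y * (κ y - κ x)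
        + (statDist w x * w x y) * ψ := fun x y => by ring
  simp only [expand, Finset.sum_add_distrib, Finset.sum_sub_distrib]
  rw [sum_pw_grad hWw κ]
  rw [show ∑ x : X, ∑ y : X, statDist w x * w x y * ψ
      = (∑ x : X, ∑ y : X, statDist w x * w x y) * ψ by
    rw [Finset.sum_mul]
    exact Finset.sum_congr rfl fun x _ => (Finset.sum_mul _ _ _).symm]
  rw [sum_pw_one hWw, one_mul, sub_zero]
  congr 1
  have hswap : ∑ x : X, ∑ y : X, statDist w x * w x y * (∑ k : Fin K, θ k * F k x y)
      = ∑ k : Fin K, θ k * μ k := by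
    calc ∑ x : X, ∑ y : X, statDist w x * w x y * (∑ k : Fin K, θ k * F k x y)
        = ∑ x : X, ∑ y : X, ∑ k : Fin K, θ k * (statDist w x * w x y * F k x y) := by
          refine Finset.sum_congr rfl fun x _ => Finset.sum_congr rfl fun y _ => ?_
          rw [Finset.mul_sum]
          exact Finset.sum_congr rfl fun k _ => by ring
      _ = ∑ k : Fin K, ∑ x : X, ∑ y : X, θ k * (statDist w x * w x y * F k x y) := by
          exact Eq.trans (Finset.sum_congr rfl fun x _ => Finset.sum_comm) Finset.sum_comm
      _ = ∑ k : Fin K, θ k * ∑ x : X, ∑ y : X, statDist w x * w x y * F k x y := by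
          refine Finset.sum_congr rfl fun k _ => ?_
          rw [Finset.mul_sum]
          exact Finset.sum_congr rfl fun x _ => (Finset.mul_sum _ _ _).symm
      _ = ∑ k : Fin K, θ k * μ k := by
          refine Finset.sum_congr rfl fun k _ => ?_
          rw [← sumP_eq hWw (F k), hw.2 k]
  rw [hswap]
end main

section pos
variable {X : Type*} [Fintype X] [Nonempty X] {E : Set (X × X)}

lemma sub_le_mul_log {a b : ℝ} (ha : 0 < a) (hb : 0 < b) :
    a - b ≤ a * Real.log (a / b) := by
  have hlog : Real.log (a / b) = -Real.log (b / a) := by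
    rw [← Real.log_inv, inv_div]
  rw [hlog]
  have h := Real.log_le_sub_one_of_pos (div_pos hb ha)
  have h2 : a * Real.log (b / a) ≤ a * (b / a - 1) :=
    mul_le_mul_of_nonneg_left h ha.le
  have h3 : a * (b / a - 1) = b - a := by field_simp
  linarith

lemma sub_lt_mul_log {a b : ℝ} (ha : 0 < a) (hb : 0 < b) (hab : a ≠ b) :
    a - b < a * Real.log (a / b) := by
  have hlog : Real.log (a / b) = -Real.log (b / a) := by
    rw [← Real.log_inv, inv_div]
  rw [hlog]
  have hne : b / a ≠ 1 := by
    intro h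
    exact hab ((div_eq_one_iff_eq (ne_of_gt ha)).1 h).symm
  have h := Real.log_lt_sub_one_of_pos (div_pos hb ha) hne
  have h2 : a * Real.log (b / a) < a * (b / a - 1) :=
    (mul_lt_mul_iff_right₀ ha).2 h
  have h3 : a * (b / a - 1) = b - a := by field_simp
  linarith

lemma sum_ite_w_one {w : X → X → ℝ} (hw : MemW E w) (x : X) :
    ∑ y : X, (if (x, y) ∈ E then w x y else 0) = 1 := by
  rw [show ∑ y : X, (if (x, y) ∈ E then w x y else 0) = ∑ y : X, w x y from
    Finset.sum_congr rfl fun y _ => by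
      by_cases h : (x, y) ∈ E
      · rw [if_pos h]
      · rw [if_neg h, memW_zero hw h]]
  exact hw.1.2 x

lemma divRate_pos (hE : StronglyConnected E) {w ws : X → X → ℝ}
    (hw : MemW E w) (hws : MemW E ws) (hne : w ≠ ws) :
    0 < divRate E w ws := by
  set p := statDist w with hp
  have ppos : ∀ x, 0 < p x := statDist_pos hE hw
  set g : X → ℝ := fun x => ∑ y : X,
    if (x, y) ∈ E then w x y * Real.log (w x y / ws x y) else 0 with hg
  have hDg : divRate E w ws = ∑ x : X, p x * g x := by
    unfold divRate
    refine Finset.sum_congr rfl fun x _ => ?_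
    rw [hg, Finset.mul_sum]
    refine Finset.sum_congr rfl fun y _ => ?_
    by_cases h : (x, y) ∈ E
    · rw [if_pos h, if_pos h]; ring
    · rw [if_neg h, if_neg h, mul_zero]
  have hzero : ∀ x : X, ∑ y : X, (if (x, y) ∈ E then w x y - ws x y else 0) = 0 := by
    intro x
    have : ∀ y : X, (if (x, y) ∈ E then w x y - ws x y else 0)
        = (if (x, y) ∈ E then w x y else 0) - (if (x, y) ∈ E then ws x y else 0) := by
      intro y; by_cases h : (x, y) ∈ E <;> simp [h]
    rw [Finset.sum_congr rfl fun y _ => this y, Finset.sum_sub_distrib,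
      sum_ite_w_one hw x, sum_ite_w_one hws x, sub_self]
  have hterm_le : ∀ x y : X, (if (x, y) ∈ E then w x y - ws x y else 0)
      ≤ (if (x, y) ∈ E then w x y * Real.log (w x y / ws x y) else 0) := by
    intro x y
    by_cases h : (x, y) ∈ E
    · rw [if_pos h, if_pos h]
      exact sub_le_mul_log (memW_pos hw h) (memW_pos hws h)
    · rw [if_neg h, if_neg h]
  have hg_nonneg : ∀ x : X, 0 ≤ g x := by
    intro x
    rw [← hzero x]
    exact Finset.sum_le_sum fun y _ => hterm_le x y
  obtain ⟨x1, y1, hne1⟩ : ∃ x y : X, w x y ≠ ws x y := by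
    by_contra h
    push_neg at h
    exact hne (funext fun x => funext fun y => h x y)
  have hE1 : (x1, y1) ∈ E := by
    by_contra h
    exact hne1 (by rw [memW_zero hw h, memW_zero hws h])
  have hg_pos : 0 < g x1 := by
    rw [← hzero x1]
    refine Finset.sum_lt_sum (fun y _ => hterm_le x1 y) ⟨y1, Finset.mem_univ y1, ?_⟩
    rw [if_pos hE1, if_pos hE1]
    exact sub_lt_mul_log (memW_pos hw hE1) (memW_pos hws hE1) hne1
  rw [hDg]
  refine Finset.sum_pos' (fun x _ => mul_nonneg (ppos x).le (hg_nonneg x))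
    ⟨x1, Finset.mem_univ x1, mul_pos (ppos x1) hg_pos⟩
end pos


/-- the unique element of the intersection is the unique
minimizer of the divergence rate over the mixture family (e-projection). -/
theorem stmt_13 {X : Type*} [Fintype X] [Nonempty X] (E : Set (X × X))
    (hE : StronglyConnected E) (K : ℕ)
    (C : X → X → ℝ) (F : Fin K → X → X → ℝ) (hF : LinIndepModN E F)
    (μ : Fin K → ℝ) (v wstar : X → X → ℝ)
    (hv : MemExpFam E C F v)
    (hstar : MemMix E F μ wstar ∧ MemExpFam E C F wstar) :
    ∀ w : X → X → ℝ, MemMix E F μ w → w ≠ wstar →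
      divRate E wstar v < divRate E w v := by
  obtain ⟨hwsM, hwsE⟩ := hstar
  obtain ⟨hWv, θv, κv, ψv, hveq⟩ := hv
  obtain ⟨hWs, θs, κs, ψs, hseq⟩ := hwsE
  intro w hwM hne
  have d1 := divRate_decomp C F μ v θv κv ψv hwM hveq
  have d2 := divRate_decomp C F μ wstar θs κs ψs hwM hseq
  have d3 := divRate_decomp C F μ v θv κv ψv hwsM hveq
  have d4 := divRate_decomp C F μ wstar θs κs ψs hwsM hseq
  have z : divRate E wstar wstar = 0 := divRate_self hWs
  have hpos : 0 < divRate E w wstar := divRate_pos hE hwM.1 hWs hne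
  have key : divRate E w v - divRate E w wstar
      = divRate E wstar v - divRate E wstar wstar := by
    rw [d1, d2, d3, d4]; ring
  linarith
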